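/- arXiv:1210.4668 — 5 statements merged into one kernel-verified Lean document; each statement's English description precedes it below -/
import Mathlib

section
/- Let H = (V, E) be a hypergraph with |E| = n hyperedges, each of which is nonempty. Then there exists an edge-discriminator λ on H whose weight satisfies Σ_{v∈V} λ(v) ≤ n(n+1)/2. -/
open Finset
open scoped symmDiff

/-- `lam` is an edge-discriminator on the hypergraph with hyperedge family `E`. -/
def IsEdgeDiscriminator {V : Type*} (E : Finset (Finset V)) (lam : V → ℕ) : Prop :=
  (∀ e ∈ E, 0 < ∑ v ∈ e, lam v) ∧
  (∀ e ∈ E, ∀ f ∈ E, e ≠ f → ∑ v ∈ e, lam v ≠ ∑ v ∈ f, lam v)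

private lemma sum_update_eq' {V : Type*} [DecidableEq V]
    (lam : V → ℕ) (a : V) (x : ℕ) (ha : lam a = 0) (t : Finset V) :
    ∑ v ∈ t, Function.update lam a x v = (∑ v ∈ t, lam v) + (if a ∈ t then x else 0) := by
  by_cases h : a ∈ t
  · rw [Finset.sum_update_of_mem h, if_pos h, ← Finset.erase_eq]
    have h2 : (∑ v ∈ t.erase a, lam v) + lam a = ∑ v ∈ t, lam v :=
      Finset.sum_erase_add t lam h
    omega
  · rw [if_neg h, add_zero]
    apply Finset.sum_congr rfl
    intro v hv
    exact Function.update_of_ne (fun hva => h (by rw [← hva]; exact hv)) _ _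

private lemma aux_greedy {V : Type*} [Fintype V] [DecidableEq V]
    (E : Finset (Finset V)) (hne : ∀ e ∈ E, e.Nonempty)
    (ι : Finset V → ℕ) (hι : Function.Injective ι) (S : Finset V) :
    ∃ lam : V → ℕ,
      (∀ w, w ∉ S → lam w = 0) ∧
      (∀ e ∈ E, ∀ f ∈ E, ι e < ι f → e ∆ f ⊆ S →
        ∑ v ∈ e, lam v ≠ ∑ v ∈ f, lam v) ∧
      (∀ e ∈ E, e ⊆ S → 0 < ∑ v ∈ e, lam v) ∧
      ∑ v, lam v ≤ ((E ×ˢ E).filter (fun p => ι p.1 < ι p.2 ∧ p.1 ∆ p.2 ⊆ S)).card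
          + (E.filter (fun e => e ⊆ S)).card := by
  classical
  induction S using Finset.induction_on with
  | empty =>
      refine ⟨fun _ => 0, fun _ _ => rfl, ?_, ?_, ?_⟩
      · intro e _ f _ hlt hsub
        exfalso
        have : e ∆ f = ∅ := Finset.subset_empty.1 hsub
        have hef : e = f := by
          have := symmDiff_eq_bot.1 (by simpa [Finset.bot_eq_empty] using this)
          exact this
        rw [hef] at hlt
        exact lt_irrefl _ hlt
      · intro e he hsub
        exfalso
        obtain ⟨w, hw⟩ := hne e he
        exact absurd (hsub hw) (Finset.notMem_empty w)
      · simp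
  | @insert a S ha ih =>
      obtain ⟨lam', h1, h2, h3, h4⟩ := ih
      have hla : lam' a = 0 := h1 a ha
      set NP := (E ×ˢ E).filter
          (fun p => ι p.1 < ι p.2 ∧ p.1 ∆ p.2 ⊆ insert a S ∧ a ∈ p.1 ∆ p.2) with hNP
      set NE := E.filter (fun e => e ⊆ insert a S ∧ a ∈ e) with hNE
      set Bad := NP.image (fun p => if a ∈ p.1
            then (∑ v ∈ p.2, lam' v) - (∑ v ∈ p.1, lam' v)
            else (∑ v ∈ p.1, lam' v) - (∑ v ∈ p.2, lam' v))
          ∪ NE.image (fun _ => 0) with hBad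
      have hBadcard : Bad.card ≤ NP.card + NE.card := by
        refine le_trans (card_union_le _ _) ?_
        exact Nat.add_le_add (card_image_le) (card_image_le)
      obtain ⟨x, hx_mem, hx_not⟩ : ∃ x, x ∈ range (Bad.card + 1) ∧ x ∉ Bad := by
        by_contra hcon
        push_neg at hcon
        have hsub : range (Bad.card + 1) ⊆ Bad := fun y hy => hcon y hy
        have := card_le_card hsub
        rw [card_range] at this
        omega
      have hxle : x ≤ Bad.card := by
        have := mem_range.1 hx_mem; omega
      have hsum : ∀ t : Finset V,
          ∑ v ∈ t, Function.update lam' a x v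
            = (∑ v ∈ t, lam' v) + (if a ∈ t then x else 0) :=
        fun t => sum_update_eq' lam' a x hla t
      refine ⟨Function.update lam' a x, ?_, ?_, ?_, ?_⟩
      · intro w hw
        rw [Function.update_of_ne (fun h => hw (by rw [h]; exact mem_insert_self a S))]
        exact h1 w (fun hws => hw (mem_insert_of_mem hws))
      · intro e he f hf hlt hsub
        rw [hsum e, hsum f]
        by_cases hm : a ∈ e ∆ f
        · have hpmem : (e, f) ∈ NP := by
            rw [hNP]
            exact mem_filter.2 ⟨mem_product.2 ⟨he, hf⟩, hlt, hsub, hm⟩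
          rcases Finset.mem_symmDiff.1 hm with ⟨hae, haf⟩ | ⟨haf, hae⟩
          · rw [if_pos hae, if_neg haf]
            intro heq
            apply hx_not
            refine mem_union_left _ (mem_image.2 ⟨(e, f), hpmem, ?_⟩)
            show (if a ∈ e then (∑ v ∈ f, lam' v) - (∑ v ∈ e, lam' v)
                else (∑ v ∈ e, lam' v) - (∑ v ∈ f, lam' v)) = x
            rw [if_pos hae]
            omega
          · rw [if_neg hae, if_pos haf]
            intro heq
            apply hx_not
            refine mem_union_left _ (mem_image.2 ⟨(e, f), hpmem, ?_⟩)
            show (if a ∈ e then (∑ v ∈ f, lam' v) - (∑ v ∈ e, lam' v)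
                else (∑ v ∈ e, lam' v) - (∑ v ∈ f, lam' v)) = x
            rw [if_neg hae]
            omega
        · have hiff : a ∈ e ↔ a ∈ f := by
            rw [Finset.mem_symmDiff] at hm
            push_neg at hm
            exact ⟨hm.1, hm.2⟩
          have hsub' : e ∆ f ⊆ S := by
            intro w hw
            rcases mem_insert.1 (hsub hw) with rfl | h
            · exact absurd hw hm
            · exact h
          have hne' := h2 e he f hf hlt hsub'
          by_cases hae : a ∈ e
          · rw [if_pos hae, if_pos (hiff.1 hae)]
            omega
          · rw [if_neg hae, if_neg (fun h => hae (hiff.2 h))]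
            omega
      · intro e he hesub
        rw [hsum e]
        by_cases hae : a ∈ e
        · have h0 : (0:ℕ) ∈ Bad := by
            refine mem_union_right _ (mem_image.2 ⟨e, ?_, rfl⟩)
            rw [hNE]
            exact mem_filter.2 ⟨he, hesub, hae⟩
          have hx0 : x ≠ 0 := fun h => hx_not (h ▸ h0)
          rw [if_pos hae]
          omega
        · have hes : e ⊆ S := by
            intro w hw
            rcases mem_insert.1 (hesub hw) with rfl | h
            · exact absurd hw hae
            · exact h
          have := h3 e he hes
          rw [if_neg hae]
          omega
      · have hsumu : ∑ v, Function.update lam' a x v = (∑ v, lam' v) + x := by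
          rw [hsum univ, if_pos (mem_univ a)]
        have hPsplit :
            ((E ×ˢ E).filter (fun p => ι p.1 < ι p.2 ∧ p.1 ∆ p.2 ⊆ insert a S)).card
              = ((E ×ˢ E).filter (fun p => ι p.1 < ι p.2 ∧ p.1 ∆ p.2 ⊆ S)).card
                + NP.card := by
          have heq : (E ×ˢ E).filter (fun p => ι p.1 < ι p.2 ∧ p.1 ∆ p.2 ⊆ insert a S)
              = (E ×ˢ E).filter (fun p => ι p.1 < ι p.2 ∧ p.1 ∆ p.2 ⊆ S) ∪ NP := by
            rw [hNP]
            ext p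
            simp only [mem_filter, mem_union]
            constructor
            · rintro ⟨hp, hlt, hsub⟩
              by_cases hm : a ∈ p.1 ∆ p.2
              · exact Or.inr ⟨hp, hlt, hsub, hm⟩
              · refine Or.inl ⟨hp, hlt, fun w hw => ?_⟩
                rcases mem_insert.1 (hsub hw) with rfl | h
                · exact absurd hw hm
                · exact h
            · rintro (⟨hp, hlt, hsub⟩ | ⟨hp, hlt, hsub, hm⟩)
              · exact ⟨hp, hlt, hsub.trans (subset_insert a S)⟩
              · exact ⟨hp, hlt, hsub⟩
          rw [heq, card_union_of_disjoint]
          rw [hNP]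
          refine Finset.disjoint_left.2 ?_
          intro p hp1 hp2
          rw [mem_filter] at hp1 hp2
          exact ha (hp1.2.2 hp2.2.2.2)
        have hQsplit :
            (E.filter (fun e => e ⊆ insert a S)).card
              = (E.filter (fun e => e ⊆ S)).card + NE.card := by
          have heq : E.filter (fun e => e ⊆ insert a S)
              = E.filter (fun e => e ⊆ S) ∪ NE := by
            rw [hNE]
            ext e
            simp only [mem_filter, mem_union]
            constructor
            · rintro ⟨he, hsub⟩
              by_cases hae : a ∈ e
              · exact Or.inr ⟨he, hsub, hae⟩
              · refine Or.inl ⟨he, fun w hw => ?_⟩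
                rcases mem_insert.1 (hsub hw) with rfl | h
                · exact absurd hw hae
                · exact h
            · rintro (⟨he, hsub⟩ | ⟨he, hsub, _⟩)
              · exact ⟨he, hsub.trans (subset_insert a S)⟩
              · exact ⟨he, hsub⟩
          rw [heq, card_union_of_disjoint]
          rw [hNE]
          refine Finset.disjoint_left.2 ?_
          intro e he1 he2
          rw [mem_filter] at he1 he2
          exact ha (he1.2 he2.2.2)
        rw [hsumu, hPsplit, hQsplit]
        omega

theorem upper_bound_exists {V : Type*} [Fintype V] [DecidableEq V]
    (E : Finset (Finset V)) (n : ℕ) (hcard : E.card = n)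
    (hne : ∀ e ∈ E, e.Nonempty) :
    ∃ lam : V → ℕ, IsEdgeDiscriminator E lam ∧ ∑ v, lam v ≤ n * (n + 1) / 2 := by
  classical
  set ι : Finset V → ℕ := fun e => ((Fintype.equivFin (Finset V)) e : ℕ) with hιdef
  have hι : Function.Injective ι := by
    intro e f h
    exact (Fintype.equivFin (Finset V)).injective (Fin.val_injective h)
  obtain ⟨lam, hsupp, hpairs, hpos, hw⟩ := aux_greedy E hne ι hι Finset.univ
  refine ⟨lam, ⟨fun e he => hpos e he (subset_univ e), ?_⟩, ?_⟩
  · intro e he f hf hnef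
    rcases lt_trichotomy (ι e) (ι f) with h | h | h
    · exact hpairs e he f hf h (subset_univ _)
    · exact absurd (hι h) hnef
    · exact (hpairs f hf e he h (subset_univ _)).symm
  · have hQ : (E.filter (fun e => e ⊆ (univ : Finset V))).card = n := by
      rw [filter_true_of_mem (fun e _ => subset_univ e), hcard]
    have hPeq : (E ×ˢ E).filter (fun p => ι p.1 < ι p.2 ∧ p.1 ∆ p.2 ⊆ (univ : Finset V))
        = (E ×ˢ E).filter (fun p => ι p.1 < ι p.2) := by
      apply filter_congr
      intro p _
      simp [subset_univ]
    have hcardAB : ((E ×ˢ E).filter (fun p => ι p.1 < ι p.2)).card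
        = ((E ×ˢ E).filter (fun p => ι p.2 < ι p.1)).card := by
      apply Finset.card_bij (fun (p : Finset V × Finset V) _ => (p.2, p.1))
      · rintro ⟨e, f⟩ hp
        rw [mem_filter, mem_product] at hp
        rw [mem_filter, mem_product]
        exact ⟨⟨hp.1.2, hp.1.1⟩, hp.2⟩
      · rintro ⟨e, f⟩ _ ⟨e', f'⟩ _ heq
        simp only [Prod.mk.injEq] at heq ⊢
        exact ⟨heq.2, heq.1⟩
      · rintro ⟨e, f⟩ hp
        refine ⟨(f, e), ?_, rfl⟩
        rw [mem_filter, mem_product] at hp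
        rw [mem_filter, mem_product]
        exact ⟨⟨hp.1.2, hp.1.1⟩, hp.2⟩
    have hunion : (E ×ˢ E).filter (fun p => ι p.1 < ι p.2)
        ∪ (E ×ˢ E).filter (fun p => ι p.2 < ι p.1) = E.offDiag := by
      ext p
      simp only [mem_union, mem_filter, mem_product, mem_offDiag]
      constructor
      · rintro (⟨⟨hp1, hp2⟩, h3⟩ | ⟨⟨hp1, hp2⟩, h3⟩)
        · exact ⟨hp1, hp2, fun hk => absurd (hk ▸ h3) (lt_irrefl _)⟩
        · exact ⟨hp1, hp2, fun hk => by rw [hk] at h3; exact absurd h3 (lt_irrefl _)⟩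
      · rintro ⟨hp1, hp2, h3⟩
        rcases lt_trichotomy (ι p.1) (ι p.2) with h | h | h
        · exact Or.inl ⟨⟨hp1, hp2⟩, h⟩
        · exact absurd (hι h) h3
        · exact Or.inr ⟨⟨hp1, hp2⟩, h⟩
    have hdisjAB : Disjoint ((E ×ˢ E).filter (fun p => ι p.1 < ι p.2))
        ((E ×ˢ E).filter (fun p => ι p.2 < ι p.1)) := by
      refine Finset.disjoint_left.2 ?_
      intro p hp1 hp2
      rw [mem_filter] at hp1 hp2
      exact absurd (hp1.2.trans hp2.2) (lt_irrefl _)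
    have hAB : ((E ×ˢ E).filter (fun p => ι p.1 < ι p.2)).card
        + ((E ×ˢ E).filter (fun p => ι p.2 < ι p.1)).card = n * n - n := by
      rw [← card_union_of_disjoint hdisjAB, hunion, offDiag_card, hcard]
    have hn2 : n ≤ n * n := by
      rcases Nat.eq_zero_or_pos n with rfl | hp
      · simp
      · exact Nat.le_mul_of_pos_left n hp
    rw [hPeq, hQ] at hw
    have hgoal : n * (n + 1) = n * n + n := by ring
    rw [hgoal]
    omega
end

section
/- Let H = (V, E) be a hypergraph with |E| = n hyperedges, and let S ⊆ V be a hitting set of H, i.e., S ∩ e ≠ ∅ for every hyperedge e ∈ E. Then there exists an edge-discriminator λ on H whose weight satisfies Σ_{v∈V} λ(v) ≤ n(n−1)/2 + |S|. -/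
open Finset

section Aux

variable {V : Type*} [DecidableEq V] [LinearOrder V] [Nonempty V]

/-- The minimum vertex of the symmetric difference of two finsets (junk value if equal). -/
noncomputable def keyv (a b : Finset V) : V :=
  if h : (symmDiff a b).Nonempty then (symmDiff a b).min' h else Classical.arbitrary V

lemma symmDiff_nonempty_of_ne {a b : Finset V} (h : a ≠ b) : (symmDiff a b).Nonempty := by
  rw [Finset.nonempty_iff_ne_empty]
  intro he
  exact h (symmDiff_eq_bot.mp (he.trans Finset.bot_eq_empty.symm))

lemma keyv_mem {a b : Finset V} (h : a ≠ b) : keyv a b ∈ symmDiff a b := by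
  rw [keyv, dif_pos (symmDiff_nonempty_of_ne h)]
  exact Finset.min'_mem _ _

lemma keyv_le {a b : Finset V} (h : a ≠ b) {x : V} (hx : x ∈ symmDiff a b) :
    keyv a b ≤ x := by
  rw [keyv, dif_pos (symmDiff_nonempty_of_ne h)]
  exact Finset.min'_le _ _ hx

lemma keyv_comm (a b : Finset V) : keyv a b = keyv b a := by
  rw [keyv, keyv]
  congr 1 <;> rw [symmDiff_comm]

lemma exists_not_mem_le_card (D : Finset ℕ) : ∃ c, c ≤ D.card ∧ c ∉ D := by
  have h1 : (Finset.range (D.card + 1)).card - D.card ≤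
      ((Finset.range (D.card + 1)) \ D).card := Finset.le_card_sdiff D _
  rw [Finset.card_range] at h1
  have h2 : ((Finset.range (D.card + 1)) \ D).Nonempty := Finset.card_pos.mp (by omega)
  obtain ⟨c, hc⟩ := h2
  rw [Finset.mem_sdiff, Finset.mem_range] at hc
  exact ⟨c, by omega, hc.2⟩

lemma main_sep [Fintype V] (E : Finset (Finset V)) (μ : V → ℕ) :
    ∀ (k : ℕ) (T : Finset V), T.card = k →
    ∃ lam : V → ℕ,
      2 * ∑ v, lam v ≤
        ((E ×ˢ E).filter fun p => p.1 ≠ p.2 ∧ keyv p.1 p.2 ∈ T).card ∧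
      ∀ a ∈ E, ∀ b ∈ E, a ≠ b → keyv a b ∈ T →
        ∑ u ∈ a, (μ u + lam u) ≠ ∑ u ∈ b, (μ u + lam u) := by
  intro k
  induction k with
  | zero =>
    intro T hT
    refine ⟨fun _ => 0, by simp, ?_⟩
    intro a ha b hb hab hkey
    rw [Finset.card_eq_zero] at hT
    simp [hT] at hkey
  | succ k ih =>
    intro T hTcard
    have hTne : T.Nonempty := Finset.card_pos.mp (by omega)
    set v := T.min' hTne with hv
    have hvT : v ∈ T := T.min'_mem hTne
    set T' := T.erase v with hT'
    have hT'card : T'.card = k := by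
      rw [hT', Finset.card_erase_of_mem hvT, hTcard]
      omega

    obtain ⟨lam, hlam2, hsep⟩ := ih T' hT'card
    set w : Finset V → ℕ := fun x => ∑ u ∈ x, (μ u + lam u) with hw
    set NP := (E ×ˢ E).filter
        (fun p => p.1 ≠ p.2 ∧ keyv p.1 p.2 = v ∧ v ∈ p.1) with hNP
    set D := NP.image (fun p => w p.2 - w p.1) with hD
    obtain ⟨c, hcle, hcD⟩ := exists_not_mem_le_card D
    have hDcard : D.card ≤ NP.card := Finset.card_image_le
    -- facts about membership in NP
    have hNPmem : ∀ p ∈ NP, p.1 ∈ E ∧ p.2 ∈ E ∧ p.1 ≠ p.2 ∧ keyv p.1 p.2 = v ∧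
        v ∈ p.1 ∧ v ∉ p.2 := by
      intro p hp
      rw [hNP, Finset.mem_filter, Finset.mem_product] at hp
      obtain ⟨⟨h1, h2⟩, h3, h4, h5⟩ := hp
      have hm := keyv_mem h3
      rw [h4, Finset.mem_symmDiff] at hm
      rcases hm with ⟨_, hnb⟩ | ⟨_, hna⟩
      · exact ⟨h1, h2, h3, h4, h5, hnb⟩
      · exact absurd h5 hna
    refine ⟨fun u => lam u + (if u = v then c else 0), ?_, ?_⟩
    · -- cardinality bound
      have hsum : ∑ u, (lam u + if u = v then c else 0) = (∑ u, lam u) + c := by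
        rw [Finset.sum_add_distrib]
        congr 1
        simp
      set PT := (E ×ˢ E).filter (fun p => p.1 ≠ p.2 ∧ keyv p.1 p.2 ∈ T) with hPT
      set PT' := (E ×ˢ E).filter (fun p => p.1 ≠ p.2 ∧ keyv p.1 p.2 ∈ T') with hPT'
      set SNP := NP.image Prod.swap with hSNP
      have hSNPmem : ∀ p ∈ SNP, p.1 ∈ E ∧ p.2 ∈ E ∧ p.1 ≠ p.2 ∧ keyv p.1 p.2 = v ∧
          v ∉ p.1 := by
        intro p hp
        rw [hSNP, Finset.mem_image] at hp
        obtain ⟨q, hq, rfl⟩ := hp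
        obtain ⟨h1, h2, h3, h4, h5, h6⟩ := hNPmem q hq
        exact ⟨h2, h1, h3.symm, by rw [keyv_comm]; exact h4, h6⟩
      have hsub : PT' ∪ (NP ∪ SNP) ⊆ PT := by
        intro p hp
        rw [Finset.mem_union, Finset.mem_union] at hp
        rw [hPT, Finset.mem_filter]
        rcases hp with hp | hp | hp
        · rw [hPT', Finset.mem_filter] at hp
          exact ⟨hp.1, hp.2.1, Finset.mem_of_mem_erase hp.2.2⟩
        · obtain ⟨h1, h2, h3, h4, _, _⟩ := hNPmem p hp
          exact ⟨Finset.mem_product.mpr ⟨h1, h2⟩, h3, by rw [h4]; exact hvT⟩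
        · obtain ⟨h1, h2, h3, h4, _⟩ := hSNPmem p hp
          exact ⟨Finset.mem_product.mpr ⟨h1, h2⟩, h3, by rw [h4]; exact hvT⟩
      have hd1 : Disjoint NP SNP := by
        rw [Finset.disjoint_left]
        intro p hp hps
        exact (hSNPmem p hps).2.2.2.2 (hNPmem p hp).2.2.2.2.1
      have hd2 : Disjoint PT' (NP ∪ SNP) := by
        rw [Finset.disjoint_left]
        intro p hp hpn
        rw [hPT', Finset.mem_filter] at hp
        have hne : keyv p.1 p.2 ≠ v := Finset.ne_of_mem_erase hp.2.2
        rw [Finset.mem_union] at hpn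
        rcases hpn with hpn | hpn
        · exact hne (hNPmem p hpn).2.2.2.1
        · exact hne (hSNPmem p hpn).2.2.2.1
      have hSNPcard : SNP.card = NP.card := Finset.card_image_of_injective _ Prod.swap_injective
      have hcards : PT'.card + (NP.card + SNP.card) ≤ PT.card := by
        rw [← Finset.card_union_of_disjoint hd1, ← Finset.card_union_of_disjoint hd2]
        exact Finset.card_le_card hsub
      rw [hsum]
      omega
    · -- separation
      have hW : ∀ x : Finset V,
          ∑ u ∈ x, (μ u + (lam u + if u = v then c else 0)) =
            w x + (if v ∈ x then c else 0) := by
        intro x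
        rw [hw]
        simp only [← add_assoc]
        rw [Finset.sum_add_distrib]
        congr 1
        simp
      intro a ha b hb hab hkey
      rw [hW a, hW b]
      have hTins : T = insert v T' := (Finset.insert_erase hvT).symm
      rw [hTins, Finset.mem_insert] at hkey
      rcases hkey with hkey | hkey
      · -- new pair: keyv a b = v
        have hmem := keyv_mem hab
        rw [hkey, Finset.mem_symmDiff] at hmem
        rcases hmem with ⟨hva, hvb⟩ | ⟨hvb, hva⟩
        · rw [if_pos hva, if_neg hvb]
          intro heq
          apply hcD
          rw [hD]
          refine Finset.mem_image.mpr ⟨(a, b), ?_, show w b - w a = c by omega⟩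
          rw [hNP, Finset.mem_filter, Finset.mem_product]
          exact ⟨⟨ha, hb⟩, hab, hkey, hva⟩
        · rw [if_neg hva, if_pos hvb]
          intro heq
          apply hcD
          rw [hD]
          refine Finset.mem_image.mpr ⟨(b, a), ?_, show w a - w b = c by omega⟩
          rw [hNP, Finset.mem_filter, Finset.mem_product]
          exact ⟨⟨hb, ha⟩, hab.symm, by rw [keyv_comm]; exact hkey, hvb⟩
      · -- old pair: keyv a b ∈ T'
        have hvnot : v ∉ symmDiff a b := by
          intro hvs
          have h1 : keyv a b ≤ v := keyv_le hab hvs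
          have h2 : v ≤ keyv a b := T.min'_le _ (Finset.mem_of_mem_erase hkey)
          exact Finset.ne_of_mem_erase hkey (le_antisymm h1 h2)
        have hiff : v ∈ a ↔ v ∈ b := by
          rw [Finset.mem_symmDiff] at hvnot
          tauto
        have hne : w a ≠ w b := hsep a ha b hb hab hkey
        by_cases hva : v ∈ a
        · rw [if_pos hva, if_pos (hiff.mp hva)]
          omega
        · rw [if_neg hva, if_neg (fun h => hva (hiff.mpr h))]
          omega

end Aux

theorem upper_bound_hitting_set {V : Type*} [Fintype V] [DecidableEq V]
    (E : Finset (Finset V)) (n : ℕ) (hcard : E.card = n)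
    (S : Finset V) (hhit : ∀ e ∈ E, (S ∩ e).Nonempty) :
    ∃ lam : V → ℕ, IsEdgeDiscriminator E lam ∧
      ∑ v, lam v ≤ n * (n - 1) / 2 + S.card := by
  rcases isEmpty_or_nonempty V with hV | hV
  · have hE : E = ∅ := by
      rw [Finset.eq_empty_iff_forall_notMem]
      intro e he
      obtain ⟨x, -⟩ := hhit e he
      exact hV.elim x
    exact ⟨fun _ => 0, ⟨by simp [hE], by simp [hE]⟩, by simp⟩
  · letI : LinearOrder V := LinearOrder.lift' (Fintype.equivFin V) (Fintype.equivFin V).injective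
    obtain ⟨lam, hlam2, hsep⟩ :=
      main_sep E (fun v => if v ∈ S then 1 else 0) Finset.univ.card Finset.univ rfl
    refine ⟨fun u => (if u ∈ S then 1 else 0) + lam u, ⟨?_, ?_⟩, ?_⟩
    · intro e he
      obtain ⟨x, hx⟩ := hhit e he
      rw [Finset.mem_inter] at hx
      refine Finset.sum_pos' (fun i _ => Nat.zero_le _) ⟨x, hx.2, ?_⟩
      simp [hx.1]
    · intro e he f hf hef
      exact hsep e he f hf hef (Finset.mem_univ _)
    · have h1 : ∑ v : V, ((if v ∈ S then 1 else 0) + lam v) = S.card + ∑ v, lam v := by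
        rw [Finset.sum_add_distrib]
        congr 1
        simp
      have hPT : ((E ×ˢ E).filter fun p =>
          p.1 ≠ p.2 ∧ keyv p.1 p.2 ∈ (Finset.univ : Finset V)) = E.offDiag := by
        ext p
        simp only [Finset.mem_filter, Finset.mem_product, Finset.mem_offDiag,
          Finset.mem_univ, and_true]
        tauto
      rw [hPT, Finset.offDiag_card, hcard] at hlam2
      have hnn : n * n = n * (n - 1) + n := by
        rcases n with _ | m
        · simp
        · simp only [Nat.succ_sub_one]
          ring
      have h2 : ∑ v, lam v ≤ n * (n - 1) / 2 := by
        rw [Nat.le_div_iff_mul_le (by norm_num : (0:ℕ) < 2)]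
        omega
      rw [h1]
      omega
end

section
/- Let 1 ≤ r ≤ m and let K^r_m = (V, E) be the complete r-uniform hypergraph on a vertex set V with |V| = m, whose hyperedges are all r-element subsets of V. Then every edge-discriminator λ on K^r_m satisfies 2·C(m−1, r−1)·Σ_{v∈V} λ(v) ≥ C(m, r)·(C(m, r) + 1), where C(a, b) denotes the binomial coefficient. -/
/-- A finite set of positive naturals of cardinality `n` has sum at least `n(n+1)/2`. -/
lemma sum_distinct_pos (s : Finset ℕ) (h0 : 0 ∉ s) :
    s.card * (s.card + 1) ≤ 2 * ∑ x ∈ s, x := by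
  induction s using Finset.strongInduction with
  | _ s ih =>
    rcases s.eq_empty_or_nonempty with rfl | hs
    · simp
    · set M := s.max' hs with hMdef
      have hM : M ∈ s := s.max'_mem hs
      have hsub : s.erase M ⊂ s := Finset.erase_ssubset hM
      have ih' := ih _ hsub (fun h => h0 (Finset.mem_of_mem_erase h))
      have hcard : s.card ≤ M := by
        have hsubset : s ⊆ Finset.Icc 1 M := fun x hx =>
          Finset.mem_Icc.2 ⟨Nat.one_le_iff_ne_zero.2 (fun h => h0 (h ▸ hx)),
            Finset.le_max' _ _ hx⟩
        calc s.card ≤ (Finset.Icc 1 M).card := Finset.card_le_card hsubset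
          _ = M := by simp
      have hsum : ∑ x ∈ s, x = M + ∑ x ∈ s.erase M, x :=
        (Finset.add_sum_erase _ _ hM).symm
      have hc : s.card = (s.erase M).card + 1 := by
        rw [Finset.card_erase_of_mem hM]
        have : 1 ≤ s.card := Finset.card_pos.2 hs
        omega
      rw [hsum, hc]
      nlinarith [ih']

theorem lower_bound_complete_r_uniform {V : Type*} [Fintype V] [DecidableEq V]
    (m r : ℕ) (hm : Fintype.card V = m) (hr1 : 1 ≤ r) (hrm : r ≤ m)
    (lam : V → ℕ)
    (hdisc : IsEdgeDiscriminator (Finset.powersetCard r (Finset.univ : Finset V)) lam) :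
    Nat.choose m r * (Nat.choose m r + 1) ≤
      2 * Nat.choose (m - 1) (r - 1) * ∑ v, lam v := by
  classical
  set E := Finset.powersetCard r (Finset.univ : Finset V) with hE
  obtain ⟨hpos, hinj⟩ := hdisc
  -- injectivity of the weight map on E
  have hinjOn : Set.InjOn (fun e => ∑ v ∈ e, lam v) E := by
    intro e he f hf hef
    by_contra h
    exact hinj e he f hf h hef
  -- image of weights
  set s := E.image (fun e => ∑ v ∈ e, lam v) with hs
  have hcardE : E.card = Nat.choose m r := by
    rw [hE, Finset.card_powersetCard, Finset.card_univ, hm]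
  have hcards : s.card = Nat.choose m r := by
    rw [hs, Finset.card_image_of_injOn hinjOn, hcardE]
  have h0s : 0 ∉ s := by
    rw [hs]
    simp only [Finset.mem_image, not_exists]
    rintro e ⟨he, h0⟩
    exact absurd h0.symm (Nat.ne_of_lt (hpos e he))
  have hsums : ∑ x ∈ s, x = ∑ e ∈ E, ∑ v ∈ e, lam v :=
    Finset.sum_image (fun e he f hf => hinjOn he hf)
  -- double counting
  have hcount : ∀ v : V, (E.filter (fun e => v ∈ e)).card = Nat.choose (m - 1) (r - 1) := by
    intro v
    have : (E.filter (fun e => v ∈ e)).card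
        = (Finset.powersetCard (r - 1) ((Finset.univ : Finset V).erase v)).card := by
      apply Finset.card_bij (fun e _ => e.erase v)
      · intro e he
        simp only [Finset.mem_filter, hE, Finset.mem_powersetCard] at he
        obtain ⟨⟨_, hcard⟩, hv⟩ := he
        rw [Finset.mem_powersetCard]
        constructor
        · intro x hx
          simp only [Finset.mem_erase] at hx ⊢
          exact ⟨hx.1, Finset.mem_univ x⟩
        · rw [Finset.card_erase_of_mem hv, hcard]
      · intro e he f hf hef
        simp only [Finset.mem_filter] at he hf
        rw [← Finset.insert_erase he.2, ← Finset.insert_erase hf.2, hef]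
      · intro t ht
        rw [Finset.mem_powersetCard] at ht
        obtain ⟨hts, htcard⟩ := ht
        have hvt : v ∉ t := fun h => (Finset.mem_erase.1 (hts h)).1 rfl
        refine ⟨insert v t, ?_, ?_⟩
        · simp only [Finset.mem_filter, hE, Finset.mem_powersetCard]
          refine ⟨⟨Finset.subset_univ _, ?_⟩, Finset.mem_insert_self _ _⟩
          rw [Finset.card_insert_of_notMem hvt, htcard]
          omega
        · rw [Finset.erase_insert hvt]
    rw [this, Finset.card_powersetCard, Finset.card_erase_of_mem (Finset.mem_univ v),
      Finset.card_univ, hm]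
  have hdc : ∑ e ∈ E, ∑ v ∈ e, lam v = Nat.choose (m - 1) (r - 1) * ∑ v, lam v := by
    have step1 : ∀ e ∈ E, ∑ v ∈ e, lam v = ∑ v : V, if v ∈ e then lam v else 0 := by
      intro e _
      rw [Finset.sum_ite_mem, Finset.univ_inter]
    rw [Finset.sum_congr rfl step1, Finset.sum_comm, Finset.mul_sum]
    refine Finset.sum_congr rfl fun v _ => ?_
    rw [Finset.sum_ite, Finset.sum_const_zero, add_zero, Finset.sum_const, hcount v, smul_eq_mul]
  have hkey := sum_distinct_pos s h0s
  rw [hcards, hsums, hdc] at hkey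
  calc Nat.choose m r * (Nat.choose m r + 1)
      ≤ 2 * (Nat.choose (m - 1) (r - 1) * ∑ v, lam v) := hkey
    _ = 2 * Nat.choose (m - 1) (r - 1) * ∑ v, lam v := by ring
end

section
/- Let r ≥ 1 and let m_1 ≥ m_2 ≥ … ≥ m_r ≥ 1 be integers. Let A_1, …, A_r be pairwise disjoint finite sets with |A_q| = m_q, and let H_r = (V, E) be the complete r-partite hypergraph with vertex set V = A_1 ∪ … ∪ A_r and hyperedges all sets {a_1, …, a_r} with a_q ∈ A_q for each q. Then the minimum weight of an edge-discriminator on H_r equals m_r + (1/2)·Σ_{q=1}^{r} (m_q − 1)·∏_{s=1}^{q} m_s. -/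
/-- `lam` is an edge-discriminator on the hypergraph whose hyperedge family is
the set `E` (vertices are natural numbers). -/
def IsEdgeDiscriminatorOn (E : Set (Finset ℕ)) (lam : ℕ → ℕ) : Prop :=
  (∀ e ∈ E, 0 < ∑ v ∈ e, lam v) ∧
  (∀ e ∈ E, ∀ f ∈ E, e ≠ f → ∑ v ∈ e, lam v ≠ ∑ v ∈ f, lam v)

/-- The hyperedges of the complete `r`-partite hypergraph with parts
`A 1, …, A r`: all transversals `{a_1, …, a_r}` with `a_q ∈ A q`. -/
def rPartiteEdges (r : ℕ) (A : ℕ → Finset ℕ) : Set (Finset ℕ) :=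
  {e | ∃ f : ℕ → ℕ, (∀ q ∈ Finset.Icc 1 r, f q ∈ A q) ∧
        e = (Finset.Icc 1 r).image f}

/-!
Write `P q = m 1 ⋯ m q`. For the upper bound, a vertex of `A q` gets weight `P (q - 1)` times its
rank in `A q`, plus `1` on the last part: edge weights are then `1 +` pairwise distinct mixed-radix
numerals, and the total weight is the stated formula.

For the lower bound, fix one vertex in each part. For `q ≤ r`, completing the `P q` transversals of
the first `q` parts by the fixed vertices of the later parts gives edges, so the weights of these
partial transversals are `P q` distinct naturals (positive when `q = r`) and add up to at least
`P q (P q - 1) / 2` (resp. `P r (P r + 1) / 2`). Their sum is `P q · Y q` with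
`Y q = ∑_{s ≤ q} ω(A s) / m s`. Since the `m q` decrease, summation by parts writes the total weight
`∑ m s (Y s - Y (s - 1))` as a nonnegative combination of the `Y q`, and the lower bounds on the
`Y q` add up to the formula.
-/

open Finset

theorem sum_range_add_le_sum {t : Finset ℕ} {k : ℕ} (h : ∀ x ∈ t, k ≤ x) :
    ∑ i ∈ range #t, (k + i) ≤ ∑ x ∈ t, x := by
  induction t using Finset.induction_on_max with
  | empty => simp
  | insert a s ha ih =>
    have has : a ∉ s := fun has ↦ (ha a has).false
    have hka : k ≤ a := h a (mem_insert_self a s)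
    have hs : #s ≤ #(Ico k a) := card_le_card fun x hx ↦
      mem_Ico.2 ⟨h x (mem_insert_of_mem hx), ha x hx⟩
    rw [Nat.card_Ico] at hs
    rw [card_insert_of_notMem has, sum_range_succ, sum_insert has]
    have := ih fun x hx ↦ h x (mem_insert_of_mem hx)
    omega

theorem sum_range_add_le_sum_of_injOn {α : Type*} {s : Finset α} {f : α → ℕ} {k : ℕ}
    (hf : Set.InjOn f s) (h : ∀ x ∈ s, k ≤ f x) :
    ∑ i ∈ range #s, (k + i) ≤ ∑ x ∈ s, f x := by
  classical
  simpa [card_image_of_injOn hf, sum_image hf] using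
    sum_range_add_le_sum (t := s.image f) (by simpa using h)

theorem cast_sum_range_add (k n : ℕ) :
    ((∑ i ∈ range n, (k + i) : ℕ) : ℚ) = n * (k + ((n : ℚ) - 1) / 2) := by
  induction n with
  | zero => simp
  | succ n ih => push_cast [sum_range_succ] at ih ⊢; rw [ih]; ring

section SummationByParts

variable {R : Type*} [CommRing R]

theorem sum_Icc_mul_eq_sum_sub_mul_partialSum (M y : ℕ → R) (n : ℕ) :
    ∑ s ∈ Icc 1 (n + 1), M s * y s =
      ∑ q ∈ Icc 1 n, (M q - M (q + 1)) * ∑ s ∈ Icc 1 q, y s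
        + M (n + 1) * ∑ s ∈ Icc 1 (n + 1), y s := by
  induction n with
  | zero => simp
  | succ n ih =>
    have hn : 1 ≤ n + 1 + 1 := by omega
    rw [sum_Icc_succ_top hn, ih, sum_Icc_succ_top hn y,
      sum_Icc_succ_top (by omega) fun q ↦ (M q - M (q + 1)) * ∑ s ∈ Icc 1 q, y s]
    ring

theorem sum_Icc_sub_mul_prod_sub_one (M : ℕ → R) (n : ℕ) :
    ∑ q ∈ Icc 1 n, (M q - M (q + 1)) * (∏ s ∈ Icc 1 q, M s - 1)
        + M (n + 1) * (∏ s ∈ Icc 1 (n + 1), M s - 1) =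
      ∑ q ∈ Icc 1 (n + 1), (M q - 1) * ∏ s ∈ Icc 1 q, M s := by
  induction n with
  | zero => simp; ring
  | succ n ih =>
    rw [sum_Icc_succ_top (by omega), sum_Icc_succ_top (by omega : 1 ≤ n + 1 + 1), ← ih,
      prod_Icc_succ_top (by omega : 1 ≤ n + 1 + 1)]
    ring

theorem sum_sub_mul_add_mul_le_sum_mul [PartialOrder R] [IsOrderedRing R] {M y L : ℕ → R}
    {ℓ : R} {n : ℕ} (hM : ∀ q ∈ Icc 1 n, M (q + 1) ≤ M q) (hM₀ : 0 ≤ M (n + 1))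
    (hL : ∀ q ∈ Icc 1 n, L q ≤ ∑ s ∈ Icc 1 q, y s) (hℓ : ℓ ≤ ∑ s ∈ Icc 1 (n + 1), y s) :
    ∑ q ∈ Icc 1 n, (M q - M (q + 1)) * L q + M (n + 1) * ℓ ≤
      ∑ s ∈ Icc 1 (n + 1), M s * y s := by
  rw [sum_Icc_mul_eq_sum_sub_mul_partialSum]
  gcongr with q hq
  · exact sub_nonneg.2 (hM q hq)
  · exact hL q hq

end SummationByParts

def partialTransversals (A : ℕ → Finset ℕ) : ℕ → Finset (Finset ℕ)
  | 0 => {∅}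
  | q + 1 => (partialTransversals A q ×ˢ A (q + 1)).image fun p ↦ insert p.2 p.1

namespace partialTransversals

variable {A : ℕ → Finset ℕ} {q : ℕ} {e : Finset ℕ}

theorem subset_biUnion (he : e ∈ partialTransversals A q) : e ⊆ (Icc 1 q).biUnion A := by
  induction q generalizing e with
  | zero => simp_all [partialTransversals]
  | succ n ih =>
    simp only [partialTransversals, mem_image, mem_product] at he
    obtain ⟨⟨e', a⟩, ⟨he', ha⟩, rfl⟩ := he
    rw [← insert_Icc_right_eq_Icc_add_one (by omega), biUnion_insert]
    exact insert_subset (mem_union_left _ ha) ((ih he').trans subset_union_right)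

theorem exists_eq_image (he : e ∈ partialTransversals A q) :
    ∃ f : ℕ → ℕ, (∀ s ∈ Icc 1 q, f s ∈ A s) ∧ e = (Icc 1 q).image f := by
  induction q generalizing e with
  | zero => exact ⟨id, by simp, by simp_all [partialTransversals]⟩
  | succ n ih =>
    simp only [partialTransversals, mem_image, mem_product] at he
    obtain ⟨⟨e', a⟩, ⟨he', ha⟩, rfl⟩ := he
    obtain ⟨f, hf, rfl⟩ := ih he'
    have hf' : Set.EqOn (Function.update f (n + 1) a) f (Icc 1 n) := fun s hs ↦
      Function.update_of_ne (by simp at hs; omega) _ _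
    refine ⟨Function.update f (n + 1) a, ?_, ?_⟩
    · rw [← insert_Icc_right_eq_Icc_add_one (by omega), forall_mem_insert, Function.update_self]
      exact ⟨ha, fun s hs ↦ hf' hs ▸ hf s hs⟩
    · rw [← insert_Icc_right_eq_Icc_add_one (by omega), image_insert, Function.update_self,
        image_congr hf']

theorem notMem_of_mem_succ (hA : (Icc 1 (q + 1) : Set ℕ).PairwiseDisjoint A)
    (he : e ∈ partialTransversals A q) {a : ℕ} (ha : a ∈ A (q + 1)) : a ∉ e := fun hae ↦ by
  obtain ⟨s, hs, has⟩ := mem_biUnion.1 (subset_biUnion he hae)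
  have := mem_Icc.1 hs
  exact disjoint_left.1 (hA (by simp; omega) (by simp) (by omega)) has ha

theorem injOn_insert (hA : (Icc 1 (q + 1) : Set ℕ).PairwiseDisjoint A) :
    Set.InjOn (fun p : Finset ℕ × ℕ ↦ insert p.2 p.1) ↑(partialTransversals A q ×ˢ A (q + 1)) := by
  rintro ⟨e, a⟩ hp ⟨e', a'⟩ hp' h
  simp only [coe_product, Set.mem_prod, mem_coe] at hp hp' h
  obtain rfl : a = a' :=
    (mem_insert.1 (h ▸ mem_insert_self a e)).resolve_right (notMem_of_mem_succ hA hp'.1 hp.2)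
  rw [← erase_insert (notMem_of_mem_succ hA hp.1 hp.2), h,
    erase_insert (notMem_of_mem_succ hA hp'.1 hp'.2)]

theorem card_eq (hA : (Icc 1 q : Set ℕ).PairwiseDisjoint A) :
    #(partialTransversals A q) = ∏ s ∈ Icc 1 q, #(A s) := by
  induction q with
  | zero => simp [partialTransversals]
  | succ n ih =>
    rw [partialTransversals, card_image_of_injOn (injOn_insert hA), card_product,
      ih (hA.subset (by gcongr; omega)), prod_Icc_succ_top (by omega)]

theorem sum_weight_succ (hA : (Icc 1 (q + 1) : Set ℕ).PairwiseDisjoint A) (lam : ℕ → ℕ) :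
    ∑ e ∈ partialTransversals A (q + 1), ∑ v ∈ e, lam v =
      #(A (q + 1)) * ∑ e ∈ partialTransversals A q, ∑ v ∈ e, lam v
        + #(partialTransversals A q) * ∑ a ∈ A (q + 1), lam a := by
  have hinsert : ∀ e ∈ partialTransversals A q, ∑ a ∈ A (q + 1), ∑ v ∈ insert a e, lam v =
      #(A (q + 1)) * ∑ v ∈ e, lam v + ∑ a ∈ A (q + 1), lam a := fun e he ↦ by
    rw [sum_congr rfl fun a ha ↦ sum_insert (notMem_of_mem_succ hA he ha), sum_add_distrib,
      sum_const, smul_eq_mul, add_comm]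
  rw [partialTransversals, sum_image (injOn_insert hA), sum_product, sum_congr rfl hinsert,
    sum_add_distrib, ← mul_sum, sum_const, smul_eq_mul]

theorem cast_sum_weight (hA : (Icc 1 q : Set ℕ).PairwiseDisjoint A) (lam : ℕ → ℕ) :
    ((∑ e ∈ partialTransversals A q, ∑ v ∈ e, lam v : ℕ) : ℚ) =
      (∏ s ∈ Icc 1 q, (#(A s) : ℚ)) * ∑ s ∈ Icc 1 q, ((∑ a ∈ A s, lam a : ℕ) : ℚ) / #(A s) := by
  induction q with
  | zero => simp [partialTransversals]
  | succ n ih =>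
    have hA' : (Icc 1 n : Set ℕ).PairwiseDisjoint A := hA.subset (by gcongr; omega)
    rw [sum_weight_succ hA, card_eq hA', Nat.cast_add, Nat.cast_mul, Nat.cast_mul, ih hA',
      Nat.cast_prod, prod_Icc_succ_top (by omega), sum_Icc_succ_top (by omega)]
    -- an empty part makes both sides vanish (`x / 0 = 0` in `ℚ`)
    rcases eq_or_ne #(A (n + 1)) 0 with h | h
    · rw [card_eq_zero.1 h]
      simp only [card_empty, sum_empty, Nat.cast_zero, zero_mul, mul_zero, add_zero]
    · have hc : (#(A (n + 1)) : ℚ) ≠ 0 := by exact_mod_cast h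
      rw [mul_add, mul_assoc _ _ (_ / _), mul_div_cancel₀ _ hc]
      ring

theorem union_image_mem_rPartiteEdges {r : ℕ} (hq : q ≤ r) {g : ℕ → ℕ}
    (hg : ∀ s ∈ Icc 1 r, g s ∈ A s) (he : e ∈ partialTransversals A q) :
    e ∪ (Ioc q r).image g ∈ rPartiteEdges r A := by
  obtain ⟨f, hf, rfl⟩ := exists_eq_image he
  refine ⟨fun s ↦ if s ≤ q then f s else g s, fun s hs ↦ ?_, ?_⟩
  · dsimp only
    split_ifs with h
    · exact hf s (mem_Icc.2 ⟨(mem_Icc.1 hs).1, h⟩)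
    · exact hg s hs
  · have hIcc : Icc 1 r = Icc 1 q ∪ Ioc q r := by ext; simp; omega
    rw [hIcc, image_union]
    congr 1 <;> refine image_congr fun s hs ↦ ?_ <;> simp at hs <;> simp [hs]

theorem injOn_weight {r : ℕ} (hA : (Icc 1 r : Set ℕ).PairwiseDisjoint A)
    (hne : ∀ s ∈ Icc 1 r, (A s).Nonempty) {lam : ℕ → ℕ}
    (hlam : IsEdgeDiscriminatorOn (rPartiteEdges r A) lam) (hq : q ≤ r) :
    Set.InjOn (fun e ↦ ∑ v ∈ e, lam v) (partialTransversals A q) := by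
  choose! g hg using hne
  have hD : ∀ e ∈ partialTransversals A q, Disjoint e ((Ioc q r).image g) := fun e he ↦ by
    refine disjoint_left.2 fun v hve hvD ↦ ?_
    obtain ⟨s, hs, hvs⟩ := mem_biUnion.1 (subset_biUnion he hve)
    obtain ⟨t, ht, rfl⟩ := mem_image.1 hvD
    simp only [mem_Icc, mem_Ioc] at hs ht
    exact disjoint_left.1 (hA (by simp; omega) (by simp; omega) (by omega)) hvs
      (hg t (by simp; omega))
  intro e he e' he' h
  rw [← union_sdiff_cancel_right (hD e he), ← union_sdiff_cancel_right (hD e' he')]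
  by_contra hne
  refine hlam.2 _ (union_image_mem_rPartiteEdges hq hg he) _
    (union_image_mem_rPartiteEdges hq hg he') (fun h' ↦ hne (by rw [h'])) ?_
  rw [sum_union (hD e he), sum_union (hD e' he')]
  simp only at h
  rw [h]

theorem add_half_le_sum_div_card (hA : (Icc 1 q : Set ℕ).PairwiseDisjoint A)
    (hne : ∀ s ∈ Icc 1 q, (A s).Nonempty) {lam : ℕ → ℕ} {k : ℕ}
    (hinj : Set.InjOn (fun e ↦ ∑ v ∈ e, lam v) (partialTransversals A q))
    (hk : ∀ e ∈ partialTransversals A q, k ≤ ∑ v ∈ e, lam v) :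
    (k : ℚ) + (∏ s ∈ Icc 1 q, (#(A s) : ℚ) - 1) / 2 ≤
      ∑ s ∈ Icc 1 q, ((∑ a ∈ A s, lam a : ℕ) : ℚ) / #(A s) := by
  have hP : (0 : ℚ) < ∏ s ∈ Icc 1 q, (#(A s) : ℚ) :=
    prod_pos fun s hs ↦ by exact_mod_cast (hne s hs).card_pos
  have h := (Nat.cast_le (α := ℚ)).2 (sum_range_add_le_sum_of_injOn hinj hk)
  rw [cast_sum_range_add, cast_sum_weight hA, card_eq hA, Nat.cast_prod] at h
  exact le_of_mul_le_mul_left h hP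

end partialTransversals

theorem sum_mul_prod_lt_prod {m d : ℕ → ℕ} {n : ℕ} (hd : ∀ q ∈ Icc 1 n, d q < m q) :
    ∑ q ∈ Icc 1 n, (∏ s ∈ Icc 1 (q - 1), m s) * d q < ∏ s ∈ Icc 1 n, m s := by
  induction n with
  | zero => simp
  | succ n ih =>
    rw [sum_Icc_succ_top (by omega), prod_Icc_succ_top (by omega), Nat.add_sub_cancel]
    calc _ < ∏ s ∈ Icc 1 n, m s + (∏ s ∈ Icc 1 n, m s) * d (n + 1) :=
          Nat.add_lt_add_right (ih fun q hq ↦ hd q (Icc_subset_Icc_right (by omega) hq)) _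
      _ = (∏ s ∈ Icc 1 n, m s) * (d (n + 1) + 1) := by ring
      _ ≤ (∏ s ∈ Icc 1 n, m s) * m (n + 1) := Nat.mul_le_mul_left _ (hd (n + 1) (by simp))

theorem eqOn_of_sum_mul_prod_eq {m d d' : ℕ → ℕ} {n : ℕ} (hd : ∀ q ∈ Icc 1 n, d q < m q)
    (hd' : ∀ q ∈ Icc 1 n, d' q < m q)
    (h : ∑ q ∈ Icc 1 n, (∏ s ∈ Icc 1 (q - 1), m s) * d q =
      ∑ q ∈ Icc 1 n, (∏ s ∈ Icc 1 (q - 1), m s) * d' q) :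
    Set.EqOn d d' (Icc 1 n) := by
  induction n with
  | zero => simp
  | succ n ih =>
    have hsub : Icc 1 n ⊆ Icc 1 (n + 1) := Icc_subset_Icc_right (by omega)
    have hlt := sum_mul_prod_lt_prod fun q hq ↦ hd q (hsub hq)
    have hlt' := sum_mul_prod_lt_prod fun q hq ↦ hd' q (hsub hq)
    rw [sum_Icc_succ_top (by omega), sum_Icc_succ_top (by omega), Nat.add_sub_cancel] at h
    have htop : d (n + 1) = d' (n + 1) := by
      have hP : 0 < ∏ s ∈ Icc 1 n, m s := by omega
      have := congrArg (· / ∏ s ∈ Icc 1 n, m s) h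
      simpa [Nat.add_mul_div_left _ _ hP, Nat.div_eq_of_lt hlt, Nat.div_eq_of_lt hlt'] using this
    have hrest := ih (fun q hq ↦ hd q (hsub hq)) (fun q hq ↦ hd' q (hsub hq))
      (by rw [htop] at h; omega)
    intro q hq
    rcases (mem_Icc.1 hq).2.lt_or_eq with hq' | rfl
    · exact hrest (mem_Icc.2 ⟨(mem_Icc.1 hq).1, by omega⟩)
    · exact htop

def rank (s : Finset ℕ) (v : ℕ) : ℕ := #{x ∈ s | x < v}

theorem rank_lt_card {s : Finset ℕ} {v : ℕ} (hv : v ∈ s) : rank s v < #s :=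
  card_lt_card (filter_ssubset.2 ⟨v, hv, lt_irrefl v⟩)

theorem rank_strictMonoOn (s : Finset ℕ) : StrictMonoOn (rank s) s := fun a ha _ _ hab ↦
  card_lt_card <| (ssubset_iff_of_subset fun x hx ↦ by
    rw [mem_filter] at hx ⊢; exact ⟨hx.1, hx.2.trans hab⟩).2 ⟨a, mem_filter.2 ⟨ha, hab⟩, by simp⟩

theorem sum_rank (s : Finset ℕ) : ∑ v ∈ s, rank s v = ∑ i ∈ range #s, i := by
  have hinj := (rank_strictMonoOn s).injOn
  have himage : s.image (rank s) = range #s :=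
    eq_of_subset_of_card_le (fun i hi ↦ by
      obtain ⟨v, hv, rfl⟩ := mem_image.1 hi
      exact mem_range.2 (rank_lt_card hv)) (by rw [card_range, card_image_of_injOn hinj])
  rw [← himage, sum_image hinj]

def optimalDiscriminator (r : ℕ) (A : ℕ → Finset ℕ) (v : ℕ) : ℕ :=
  ∑ q ∈ Icc 1 r,
    if v ∈ A q then (∏ s ∈ Icc 1 (q - 1), #(A s)) * rank (A q) v + (if q = r then 1 else 0)
    else 0

section optimalDiscriminator

variable {r : ℕ} {A : ℕ → Finset ℕ}

theorem optimalDiscriminator_of_mem (hA : (Icc 1 r : Set ℕ).PairwiseDisjoint A) {q v : ℕ}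
    (hq : q ∈ Icc 1 r) (hv : v ∈ A q) :
    optimalDiscriminator r A v =
      (∏ s ∈ Icc 1 (q - 1), #(A s)) * rank (A q) v + (if q = r then 1 else 0) := by
  rw [optimalDiscriminator, sum_eq_single_of_mem q hq fun q' hq' hne ↦
    if_neg fun hv' ↦ disjoint_left.1 (hA hq' hq hne) hv' hv, if_pos hv]

theorem sum_optimalDiscriminator_image (hr : 1 ≤ r) (hA : (Icc 1 r : Set ℕ).PairwiseDisjoint A)
    {f : ℕ → ℕ} (hf : ∀ q ∈ Icc 1 r, f q ∈ A q) :
    ∑ v ∈ (Icc 1 r).image f, optimalDiscriminator r A v =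
      ∑ q ∈ Icc 1 r, (∏ s ∈ Icc 1 (q - 1), #(A s)) * rank (A q) (f q) + 1 := by
  have hinj : Set.InjOn f (Icc 1 r) := fun i hi j hj hij ↦ by_contra fun hne ↦
    disjoint_left.1 (hA hi hj hne) (hf i hi) (hij ▸ hf j hj)
  rw [sum_image hinj, sum_congr rfl fun q hq ↦ optimalDiscriminator_of_mem hA hq (hf q hq),
    sum_add_distrib, sum_ite_eq', if_pos (by simp [hr])]

theorem isEdgeDiscriminatorOn_optimalDiscriminator (hr : 1 ≤ r)
    (hA : (Icc 1 r : Set ℕ).PairwiseDisjoint A) :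
    IsEdgeDiscriminatorOn (rPartiteEdges r A) (optimalDiscriminator r A) := by
  refine ⟨?_, ?_⟩
  · rintro _ ⟨f, hf, rfl⟩
    rw [sum_optimalDiscriminator_image hr hA hf]
    exact Nat.succ_pos _
  · rintro _ ⟨f, hf, rfl⟩ _ ⟨g, hg, rfl⟩ hne h
    rw [sum_optimalDiscriminator_image hr hA hf, sum_optimalDiscriminator_image hr hA hg] at h
    have hrank := eqOn_of_sum_mul_prod_eq (m := fun s ↦ #(A s))
      (fun q hq ↦ rank_lt_card (hf q hq)) (fun q hq ↦ rank_lt_card (hg q hq)) (by omega)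
    exact hne (image_congr fun q hq ↦
      (rank_strictMonoOn (A q)).injOn (hf q hq) (hg q hq) (hrank hq))

theorem two_mul_sum_optimalDiscriminator (hr : 1 ≤ r)
    (hA : (Icc 1 r : Set ℕ).PairwiseDisjoint A) :
    2 * ∑ v ∈ (Icc 1 r).biUnion A, optimalDiscriminator r A v =
      ∑ q ∈ Icc 1 r, (#(A q) - 1) * ∏ s ∈ Icc 1 q, #(A s) + 2 * #(A r) := by
  have hpart : ∀ q ∈ Icc 1 r, 2 * ∑ v ∈ A q, optimalDiscriminator r A v =
      (#(A q) - 1) * ∏ s ∈ Icc 1 q, #(A s) + if q = r then 2 * #(A r) else 0 := by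
    intro q hq
    obtain ⟨n, rfl⟩ : ∃ n, q = n + 1 := ⟨q - 1, by simp at hq; omega⟩
    have hdigits : 2 * ((∏ s ∈ Icc 1 n, #(A s)) * ∑ i ∈ range #(A (n + 1)), i) =
        (#(A (n + 1)) - 1) * ((∏ s ∈ Icc 1 n, #(A s)) * #(A (n + 1))) := by
      rw [mul_left_comm, mul_comm 2, sum_range_id_mul_two]
      ring
    rw [sum_congr rfl fun v hv ↦ optimalDiscriminator_of_mem hA hq hv, sum_add_distrib,
      ← mul_sum, sum_rank, sum_const, smul_eq_mul, prod_Icc_succ_top (by omega),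
      Nat.add_sub_cancel, mul_add, hdigits]
    split_ifs with h
    · subst h
      ring
    · simp
  rw [sum_biUnion hA, mul_sum, sum_congr rfl hpart, sum_add_distrib, sum_ite_eq',
    if_pos (by simp [hr])]

end optimalDiscriminator

theorem IsEdgeDiscriminatorOn.sum_sub_one_mul_prod_add_two_mul_le {r : ℕ} {A : ℕ → Finset ℕ}
    (hr : 1 ≤ r) (hA : (Icc 1 r : Set ℕ).PairwiseDisjoint A) (hne : ∀ q ∈ Icc 1 r, (A q).Nonempty)
    (hanti : AntitoneOn (fun q ↦ #(A q)) (Icc 1 r)) {lam : ℕ → ℕ}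
    (hlam : IsEdgeDiscriminatorOn (rPartiteEdges r A) lam) :
    ∑ q ∈ Icc 1 r, (#(A q) - 1) * ∏ s ∈ Icc 1 q, #(A s) + 2 * #(A r) ≤
      2 * ∑ v ∈ (Icc 1 r).biUnion A, lam v := by
  obtain ⟨n, rfl⟩ : ∃ n, r = n + 1 := ⟨r - 1, by omega⟩
  set M : ℕ → ℚ := fun q ↦ #(A q)
  set y : ℕ → ℚ := fun s ↦ ((∑ a ∈ A s, lam a : ℕ) : ℚ) / #(A s)
  have hlevel : ∀ q ≤ n + 1, ∀ k : ℕ, (∀ e ∈ partialTransversals A q, k ≤ ∑ v ∈ e, lam v) →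
      k + (∏ s ∈ Icc 1 q, M s - 1) / 2 ≤ ∑ s ∈ Icc 1 q, y s := fun q hq k hk ↦
    partialTransversals.add_half_le_sum_div_card (hA.subset (by gcongr))
      (fun s hs ↦ hne s (Icc_subset_Icc_right hq hs))
      (partialTransversals.injOn_weight hA hne hlam hq) hk
  have hpos : ∀ e ∈ partialTransversals A (n + 1), 1 ≤ ∑ v ∈ e, lam v := fun e he ↦
    hlam.1 e (partialTransversals.exists_eq_image he)
  have hbound := sum_sub_mul_add_mul_le_sum_mul (M := M) (y := y) (n := n)
    (L := fun q ↦ (∏ s ∈ Icc 1 q, M s - 1) / 2) (ℓ := 1 + (∏ s ∈ Icc 1 (n + 1), M s - 1) / 2)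
    (fun q hq ↦ by
      have := mem_Icc.1 hq
      exact Nat.cast_le.2 (hanti (by simp; omega) (by simp; omega) (by omega : q ≤ q + 1)))
    (by positivity) (fun q hq ↦ by simpa using hlevel q (by simp at hq; omega) 0 (by simp))
    (by exact_mod_cast hlevel (n + 1) le_rfl 1 hpos)
  have hweight : ∑ s ∈ Icc 1 (n + 1), M s * y s = ∑ v ∈ (Icc 1 (n + 1)).biUnion A, lam v := by
    rw [sum_biUnion hA, Nat.cast_sum]
    exact sum_congr rfl fun s hs ↦ mul_div_cancel₀ _ (by simpa [M] using (hne s hs).ne_empty)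
  have hcast : ((∑ q ∈ Icc 1 (n + 1), (#(A q) - 1) * ∏ s ∈ Icc 1 q, #(A s) : ℕ) : ℚ) =
      ∑ q ∈ Icc 1 (n + 1), (M q - 1) * ∏ s ∈ Icc 1 q, M s := by
    push_cast
    exact sum_congr rfl fun q hq ↦ by rw [Nat.cast_sub (hne q hq).card_pos]; simp [M]
  rw [hweight] at hbound
  simp only [mul_div_assoc', ← sum_div] at hbound
  rw [← Nat.cast_le (α := ℚ), Nat.cast_add, Nat.cast_mul, Nat.cast_mul, Nat.cast_ofNat, hcast,
    ← sum_Icc_sub_mul_prod_sub_one]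
  change _ + 2 * M (n + 1) ≤ _
  linarith

theorem complete_r_partite_optimum (r : ℕ) (hr : 1 ≤ r)
    (m : ℕ → ℕ) (A : ℕ → Finset ℕ)
    (hm1 : ∀ q ∈ Finset.Icc 1 r, 1 ≤ m q)
    (hmono : ∀ i ∈ Finset.Icc 1 r, ∀ j ∈ Finset.Icc 1 r, i ≤ j → m j ≤ m i)
    (hcard : ∀ q ∈ Finset.Icc 1 r, (A q).card = m q)
    (hdisj : ∀ i ∈ Finset.Icc 1 r, ∀ j ∈ Finset.Icc 1 r, i ≠ j →
      Disjoint (A i) (A j)) :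
    IsLeast {w : ℕ | ∃ lam : ℕ → ℕ,
        IsEdgeDiscriminatorOn (rPartiteEdges r A) lam ∧
        ∑ v ∈ (Finset.Icc 1 r).biUnion A, lam v = w}
      (m r + (∑ q ∈ Finset.Icc 1 r, (m q - 1) * ∏ s ∈ Finset.Icc 1 q, m s) / 2) := by
  have hA : (Icc 1 r : Set ℕ).PairwiseDisjoint A := fun i hi j hj hij ↦ hdisj i hi j hj hij
  have hne : ∀ q ∈ Icc 1 r, (A q).Nonempty := fun q hq ↦ card_pos.1 (hcard q hq ▸ hm1 q hq)
  have hanti : AntitoneOn (fun q ↦ #(A q)) (Icc 1 r) := fun i hi j hj hij ↦ by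
    simpa only [hcard i hi, hcard j hj] using hmono i hi j hj hij
  have hm : m r + (∑ q ∈ Icc 1 r, (m q - 1) * ∏ s ∈ Icc 1 q, m s) / 2 =
      #(A r) + (∑ q ∈ Icc 1 r, (#(A q) - 1) * ∏ s ∈ Icc 1 q, #(A s)) / 2 := by
    rw [hcard r (by simp [hr])]
    congr 2
    refine sum_congr rfl fun q hq ↦ ?_
    rw [hcard q hq, prod_congr rfl fun s hs ↦ hcard s (Icc_subset_Icc_right (mem_Icc.1 hq).2 hs)]
  rw [hm]
  refine ⟨⟨optimalDiscriminator r A, isEdgeDiscriminatorOn_optimalDiscriminator hr hA, ?_⟩, ?_⟩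
  · have := two_mul_sum_optimalDiscriminator hr hA
    omega
  · rintro _ ⟨lam, hlam, rfl⟩
    have := hlam.sum_sub_one_mul_prod_add_two_mul_le hr hA hne hanti
    omega
end

section
/- Let H = (V, E) be a hypergraph with |E| = n hyperedges, each nonempty, and suppose there exists a vertex v ∈ V that belongs to at least 3 hyperedges of E. Then there exists an edge-discriminator λ on H whose weight satisfies Σ_{v∈V} λ(v) ≤ n(n+1)/2 − 2. -/
open Finset Function
open scoped symmDiff

theorem Finset.exists_notMem_le_card (s : Finset ℕ) : ∃ m ∉ s, m ≤ #s := by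
  obtain ⟨m, hm, hms⟩ := exists_mem_notMem_of_card_lt_card (s := s) (t := range (#s + 1))
    (by simp)
  exact ⟨m, hms, Nat.lt_succ_iff.mp (mem_range.mp hm)⟩

theorem exists_forall_notMem_and_le_card {V : Type*} [Finite V] (ι : V → ℕ)
    (F : (V → ℕ) → V → Finset ℕ)
    (hF : ∀ lam lam' v, (∀ w, ι w < ι v → lam w = lam' w) → F lam v = F lam' v) :
    ∃ lam : V → ℕ, ∀ v, lam v ∉ F lam v ∧ lam v ≤ #(F lam v) := by
  have upTo :
      ∀ k, ∃ lam : V → ℕ, ∀ v, ι v < k → lam v ∉ F lam v ∧ lam v ≤ #(F lam v) := by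
    intro k
    induction k with
    | zero => exact ⟨0, fun v hv => absurd hv (Nat.not_lt_zero _)⟩
    | succ k ih =>
      obtain ⟨lam, hlam⟩ := ih
      choose m hm using fun v => (F lam v).exists_notMem_le_card
      refine ⟨fun v => if ι v = k then m v else lam v, fun v hv => ?_⟩
      rw [hF _ lam v fun w hw => if_neg (by omega)]
      by_cases hvk : ι v = k
      · simpa only [if_pos hvk] using hm v
      · simpa only [if_neg hvk] using hlam v (by omega)
  obtain ⟨k, hk⟩ := (Set.finite_range ι).bddAbove
  obtain ⟨lam, hlam⟩ := upTo (k + 1)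
  exact ⟨lam, fun v => hlam v (Nat.lt_succ_of_le (hk ⟨v, rfl⟩))⟩

theorem exists_injective_nat_forall_le {V : Type*} [Finite V] (v₀ : V) :
    ∃ ι : V → ℕ, Injective ι ∧ ∀ w, ι w ≤ ι v₀ := by
  classical
  obtain ⟨ι, hι⟩ := Countable.exists_injective_nat V
  have : Nonempty V := ⟨v₀⟩
  obtain ⟨m, hm⟩ := Finite.exists_max ι
  exact ⟨ι ∘ Equiv.swap v₀ m, hι.comp (Equiv.injective _), fun w => by simpa using hm _⟩

namespace EdgeDiscriminator

section IsHighest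

variable {V : Type*} (ι : V → ℕ)

def IsHighest (s : Finset V) (v : V) : Prop := v ∈ s ∧ ∀ w ∈ s, ι w ≤ ι v

instance [DecidableEq V] (s : Finset V) (v : V) : Decidable (IsHighest ι s v) :=
  inferInstanceAs (Decidable (_ ∧ _))

variable {ι}

theorem IsHighest.eq (hι : Injective ι) {s : Finset V} {v w : V}
    (hv : IsHighest ι s v) (hw : IsHighest ι s w) : v = w :=
  hι (le_antisymm (hw.2 v hv.1) (hv.2 w hw.1))

theorem IsHighest.lt (hι : Injective ι) {s : Finset V} {v w : V}
    (hv : IsHighest ι s v) (hw : w ∈ s) (hwv : w ≠ v) : ι w < ι v :=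
  lt_of_le_of_ne (hv.2 w hw) (hwv ∘ @hι _ _)

theorem exists_isHighest {s : Finset V} (hs : s.Nonempty) : ∃ v, IsHighest ι s v :=
  let ⟨v, hv, hmax⟩ := s.exists_max_image ι hs
  ⟨v, hv, hmax⟩

end IsHighest

variable {V : Type*} [DecidableEq V] (E : Finset (Finset V)) (ι : V → ℕ)

def pairsWithTop (v : V) : Finset (Finset V × Finset V) :=
  (E ×ˢ E).filter fun p => v ∈ p.1 ∧ IsHighest ι (p.1 ∆ p.2) v

def edgesWithTop (v : V) : Finset (Finset V) :=
  E.filter fun e => IsHighest ι e v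

/-- Where the difference is negative, truncated subtraction forbids a spurious `0`, which is
harmless. -/
def forbiddenValues (lam : V → ℕ) (v : V) : Finset ℕ :=
  (pairsWithTop E ι v).image
      (fun p => ∑ w ∈ p.2 \ p.1, lam w - ∑ w ∈ (p.1 \ p.2).erase v, lam w) ∪
    if (edgesWithTop E ι v).Nonempty then {0} else ∅

variable {E ι}

theorem mem_pairsWithTop {v : V} {p : Finset V × Finset V} :
    p ∈ pairsWithTop E ι v ↔
      p.1 ∈ E ∧ p.2 ∈ E ∧ v ∈ p.1 ∧ IsHighest ι (p.1 ∆ p.2) v := by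
  simp only [pairsWithTop, mem_filter, mem_product, and_assoc]

theorem notMem_snd_of_mem_pairsWithTop {v : V} {p : Finset V × Finset V}
    (hp : p ∈ pairsWithTop E ι v) : v ∉ p.2 := by
  obtain ⟨-, -, hv, htop⟩ := mem_pairsWithTop.mp hp
  rcases mem_symmDiff.mp htop.1 with ⟨-, hvf⟩ | ⟨-, hve⟩
  exacts [hvf, absurd hv hve]

theorem forbiddenValues_congr (hι : Injective ι) (lam lam' : V → ℕ) (v : V)
    (h : ∀ w, ι w < ι v → lam w = lam' w) :
    forbiddenValues E ι lam v = forbiddenValues E ι lam' v := by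
  unfold forbiddenValues
  congr 1
  refine image_congr fun p hp => ?_
  obtain ⟨-, -, hv, htop⟩ := mem_pairsWithTop.mp hp
  have below : ∀ w ∈ p.1 ∆ p.2, w ≠ v → lam w = lam' w := fun w hw hwv =>
    h w (htop.lt hι hw hwv)
  congr 1
  · refine sum_congr rfl fun w hw => below w (mem_symmDiff.mpr (Or.inr (mem_sdiff.mp hw))) ?_
    rintro rfl
    exact (mem_sdiff.mp hw).2 hv
  · refine sum_congr rfl fun w hw => ?_
    obtain ⟨hwv, hw⟩ := mem_erase.mp hw
    exact below w (mem_symmDiff.mpr (Or.inl (mem_sdiff.mp hw))) hwv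


variable {lam : V → ℕ}

theorem sum_ne_of_mem_pairsWithTop {v : V}
    (hlam : lam v ∉ forbiddenValues E ι lam v) {p : Finset V × Finset V}
    (hp : p ∈ pairsWithTop E ι v) : ∑ w ∈ p.1, lam w ≠ ∑ w ∈ p.2, lam w := by
  obtain ⟨e, f⟩ := p
  have hv : v ∈ e \ f :=
    mem_sdiff.mpr ⟨(mem_pairsWithTop.mp hp).2.2.1, notMem_snd_of_mem_pairsWithTop hp⟩
  intro heq
  rw [← sum_inter_add_sum_sdiff e f, ← sum_inter_add_sum_sdiff f e, inter_comm f e,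
    ← add_sum_erase _ _ hv] at heq
  exact hlam (mem_union_left _ (mem_image.mpr ⟨(e, f), hp, by dsimp only; omega⟩))

theorem sum_pos_of_isHighest {v : V} (hlam : lam v ∉ forbiddenValues E ι lam v) {e : Finset V}
    (he : e ∈ E) (htop : IsHighest ι e v) : 0 < ∑ w ∈ e, lam w := by
  have htops : (edgesWithTop E ι v).Nonempty := ⟨e, mem_filter.mpr ⟨he, htop⟩⟩
  have hv : lam v ≠ 0 := fun h => hlam (mem_union_right _ (by simp [htops, h]))
  exact (Nat.pos_of_ne_zero hv).trans_le (single_le_sum (fun _ _ => Nat.zero_le _) htop.1)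

theorem isEdgeDiscriminator (hne : ∀ e ∈ E, e.Nonempty)
    (hlam : ∀ v, lam v ∉ forbiddenValues E ι lam v) : IsEdgeDiscriminator E lam := by
  refine ⟨fun e he => ?_, fun e he f hf hef => ?_⟩
  · obtain ⟨v, hv⟩ := exists_isHighest (ι := ι) (hne e he)
    exact sum_pos_of_isHighest (hlam v) he hv
  · obtain ⟨v, hv⟩ := exists_isHighest (ι := ι) (symmDiff_nonempty.mpr hef)
    rcases mem_symmDiff.mp hv.1 with ⟨hve, -⟩ | ⟨hvf, -⟩
    · exact sum_ne_of_mem_pairsWithTop (hlam v)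
        (mem_pairsWithTop (p := (e, f)) |>.mpr ⟨he, hf, hve, hv⟩)
    · refine (sum_ne_of_mem_pairsWithTop (hlam v) (p := (f, e)) ?_).symm
      exact mem_pairsWithTop.mpr ⟨hf, he, hvf, symmDiff_comm e f ▸ hv⟩

variable (lam) in
theorem card_forbiddenValues_le (v : V) :
    #(forbiddenValues E ι lam v) ≤
      #(pairsWithTop E ι v) + if (edgesWithTop E ι v).Nonempty then 1 else 0 := by
  refine (card_union_le _ _).trans (add_le_add card_image_le ?_)
  split_ifs <;> simp

theorem pairwiseDisjoint_pairsWithTop (hι : Injective ι) :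
    (Set.univ : Set V).PairwiseDisjoint (pairsWithTop E ι) := fun _ _ _ _ hvw =>
  disjoint_left.mpr fun _ hv hw =>
    hvw ((mem_pairsWithTop.mp hv).2.2.2.eq hι (mem_pairsWithTop.mp hw).2.2.2)

theorem pairwiseDisjoint_edgesWithTop (hι : Injective ι) :
    (Set.univ : Set V).PairwiseDisjoint (edgesWithTop E ι) := fun _ _ _ _ hvw =>
  disjoint_left.mpr fun _ hv hw => hvw ((mem_filter.mp hv).2.eq hι (mem_filter.mp hw).2)

variable [Fintype V]

theorem sum_card_edgesWithTop_le (hι : Injective ι) : ∑ v, #(edgesWithTop E ι v) ≤ #E := by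
  rw [← card_biUnion (by simpa using pairwiseDisjoint_edgesWithTop hι)]
  exact card_le_card (biUnion_subset.mpr fun v _ => filter_subset _ _)

/-- Each unordered pair of distinct edges is counted once, in the orientation whose first edge
contains the highest vertex of the symmetric difference. -/
theorem two_mul_sum_card_pairsWithTop_le (hι : Injective ι) :
    2 * ∑ v, #(pairsWithTop E ι v) ≤ #E * #E - #E := by
  set U := univ.biUnion (pairsWithTop E ι)
  have hU : #U = ∑ v, #(pairsWithTop E ι v) :=
    card_biUnion (by simpa using pairwiseDisjoint_pairsWithTop hι)
  have hmem : ∀ p ∈ U, p ∈ E.offDiag ∧ p.swap ∉ U := by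
    intro p hp
    obtain ⟨v, -, hp⟩ := mem_biUnion.mp hp
    obtain ⟨he, hf, hv, htop⟩ := mem_pairsWithTop.mp hp
    have hvf := notMem_snd_of_mem_pairsWithTop hp
    refine ⟨mem_offDiag.mpr ⟨he, hf, fun h => hvf (h ▸ hv)⟩, fun hswap => ?_⟩
    obtain ⟨w, -, hw⟩ := mem_biUnion.mp hswap
    obtain ⟨-, -, hwf, htop'⟩ := mem_pairsWithTop.mp hw
    exact hvf (htop.eq hι (symmDiff_comm p.2 p.1 ▸ htop') ▸ hwf)
  have hdisj : Disjoint U (U.image Prod.swap) := disjoint_left.mpr fun p hp hswap => by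
    obtain ⟨q, hq, rfl⟩ := mem_image.mp hswap
    exact (hmem q hq).2 hp
  have hsub : U ∪ U.image Prod.swap ⊆ E.offDiag := union_subset (fun p hp => (hmem p hp).1)
    fun p hp => by
      obtain ⟨q, hq, rfl⟩ := mem_image.mp hp
      obtain ⟨he, hf, hef⟩ := mem_offDiag.mp (hmem q hq).1
      exact mem_offDiag.mpr ⟨hf, he, hef.symm⟩
  rw [← offDiag_card, ← hU, two_mul]
  nth_rw 2 [← card_image_of_injective U Prod.swap_injective]
  rw [← card_union_of_disjoint hdisj]
  exact card_le_card hsub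

theorem sum_indicator_nonempty_edgesWithTop_add_two_le (hι : Injective ι) {v₀ : V}
    (h3 : 3 ≤ #(edgesWithTop E ι v₀)) :
    (∑ v, if (edgesWithTop E ι v).Nonempty then 1 else 0) + 2 ≤ #E := by
  have termwise : ∀ v, ((if (edgesWithTop E ι v).Nonempty then 1 else 0) +
      if v = v₀ then 2 else 0) ≤ #(edgesWithTop E ι v) := by
    intro v
    by_cases hv : v = v₀
    · subst hv
      split_ifs <;> omega
    · rw [if_neg hv, add_zero]
      split_ifs with h
      exacts [card_pos.mpr h, Nat.zero_le _]
  calc (∑ v, if (edgesWithTop E ι v).Nonempty then 1 else 0) + 2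
      = ∑ v, ((if (edgesWithTop E ι v).Nonempty then 1 else 0) + if v = v₀ then 2 else 0) := by
        rw [sum_add_distrib, sum_ite_eq' univ v₀, if_pos (mem_univ _)]
    _ ≤ ∑ v, #(edgesWithTop E ι v) := sum_le_sum fun v _ => termwise v
    _ ≤ #E := sum_card_edgesWithTop_le hι

theorem sum_le_of_le_card_forbiddenValues (hι : Injective ι)
    (hlam : ∀ v, lam v ≤ #(forbiddenValues E ι lam v)) {v₀ : V}
    (h3 : 3 ≤ #(edgesWithTop E ι v₀)) :
    ∑ v, lam v ≤ #E * (#E + 1) / 2 - 2 := by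
  have hsplit : ∑ v, lam v ≤
      ∑ v, #(pairsWithTop E ι v) + ∑ v, if (edgesWithTop E ι v).Nonempty then 1 else 0 := by
    rw [← sum_add_distrib]
    exact sum_le_sum fun v _ => (hlam v).trans (card_forbiddenValues_le lam v)
  have hpairs := two_mul_sum_card_pairsWithTop_le (E := E) hι
  have htops := sum_indicator_nonempty_edgesWithTop_add_two_le hι h3
  have hsq : #E * (#E + 1) = #E * #E + #E := by ring
  have := Nat.le_mul_self #E
  omega

end EdgeDiscriminator

open EdgeDiscriminator

theorem upper_bound_degree_three {V : Type*} [Fintype V] [DecidableEq V]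
    (E : Finset (Finset V)) (n : ℕ) (hcard : E.card = n)
    (hne : ∀ e ∈ E, e.Nonempty)
    (hdeg : ∃ v : V, 3 ≤ (E.filter (fun e => v ∈ e)).card) :
    ∃ lam : V → ℕ, IsEdgeDiscriminator E lam ∧
      ∑ v, lam v ≤ n * (n + 1) / 2 - 2 := by
  obtain ⟨v₀, hv₀⟩ := hdeg
  obtain ⟨ι, hι, hmax⟩ := exists_injective_nat_forall_le v₀
  obtain ⟨lam, hlam⟩ :=
    exists_forall_notMem_and_le_card ι (forbiddenValues E ι) (forbiddenValues_congr hι)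
  have h3 : 3 ≤ #(edgesWithTop E ι v₀) :=
    hv₀.trans (card_le_card (monotone_filter_right E fun _ _ hv => ⟨hv, fun w _ => hmax w⟩))
  subst hcard
  exact ⟨lam, isEdgeDiscriminator hne fun v => (hlam v).1,
    sum_le_of_le_card_forbiddenValues hι (fun v => (hlam v).2) h3⟩
end
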